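/- Let E be an event structure of finite degree. (i) If there is an isometric embedding of the n × n square grid Γ_n into G(E) that maps each grid edge, oriented from (i,j) to (i+1,j) and from (i,j) to (i,j+1), to an edge of G(E) directed from the smaller configuration to the larger one, then E contains two disjoint conflict-free sets of events A = {x_0, …, x_{n-1}} and B = {y_0, …, y_{n-1}} such that x_i ∥ y_j for all i, j. (ii) Conversely, if for every n there exist two disjoint sets of events A = {x_0, …, x_{n-1}} and B = {y_0, …, y_{n-1}} with x_i ∥ y_j for all i, j, then the graph G(E) is not hyperbolic. -/

import Mathlib

/-- An event structure: a set of events with a causal partial order and a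
conflict relation that is irreflexive, symmetric and hereditary, such that
every event has finitely many causes. -/
structure EventStructure (E : Type*) where
  le : E → E → Prop
  conflict : E → E → Prop
  le_refl : ∀ e, le e e
  le_trans : ∀ e₁ e₂ e₃, le e₁ e₂ → le e₂ e₃ → le e₁ e₃
  le_antisymm : ∀ e₁ e₂, le e₁ e₂ → le e₂ e₁ → e₁ = e₂
  conflict_irrefl : ∀ e, ¬ conflict e e
  conflict_symm : ∀ e₁ e₂, conflict e₁ e₂ → conflict e₂ e₁
  conflict_le : ∀ e₁ e₂ e₃, conflict e₁ e₂ → le e₂ e₃ → conflict e₁ e₃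
  finite_cause : ∀ e, Set.Finite {e' | le e' e}

namespace EventStructure

variable {E : Type*} (ES : EventStructure E)

/-- A configuration: a finite, downward-closed, conflict-free set of events. -/
abbrev IsConfig (c : Finset E) : Prop :=
  (∀ e ∈ c, ∀ e', ES.le e' e → e' ∈ c) ∧ ∀ e ∈ c, ∀ e' ∈ c, ¬ ES.conflict e e'

/-- The type of configurations of an event structure. -/
abbrev Config : Type _ := {c : Finset E // ES.IsConfig c}

/-- `c'` is obtained from the configuration `c` by adding the single event `e`. -/
abbrev Extends (c c' : ES.Config) (e : E) : Prop :=
  e ∉ c.1 ∧ ∀ x, x ∈ c'.1 ↔ x = e ∨ x ∈ c.1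

/-- `c'` is obtained from the configuration `c` by adding a single event. -/
abbrev Covers (c c' : ES.Config) : Prop := ∃ e, ES.Extends c c' e

/-- The (undirected) graph `G(E)` of the domain of an event structure:
vertices are configurations, edges join configurations differing in one event. -/
def configGraph : SimpleGraph ES.Config where
  Adj c c' := ES.Covers c c' ∨ ES.Covers c' c
  symm := ⟨fun c c' h => Or.symm h⟩
  loopless := ⟨by
    intro c h
    have key : ¬ ES.Covers c c := by
      rintro ⟨e, he, hmem⟩
      exact he ((hmem e).mpr (Or.inl rfl))
    exact h.elim key key⟩

/-- The empty configuration, i.e. the basepoint `v₀` of the domain. -/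
def emptyConfig : ES.Config :=
  ⟨∅, fun e he => absurd he (Finset.notMem_empty e),
      fun e he => absurd he (Finset.notMem_empty e)⟩

/-- Minimal conflict `e #_μ e'`. -/
abbrev MinConflict (e e' : E) : Prop :=
  ES.conflict e e' ∧ ¬ ∃ e'', e'' ≠ e ∧ e'' ≠ e' ∧
    ((ES.le e'' e ∧ ES.conflict e'' e') ∨ (ES.le e'' e' ∧ ES.conflict e'' e))

/-- `e` is an immediate predecessor of `e'`. -/
abbrev ImmPred (e e' : E) : Prop :=
  ES.le e e' ∧ e ≠ e' ∧ ∀ e'', ES.le e e'' → ES.le e'' e' → e'' = e ∨ e'' = e'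

/-- Two events are concurrent: order-incomparable and not in conflict. -/
abbrev Concurrent (e e' : E) : Prop :=
  ¬ ES.le e e' ∧ ¬ ES.le e' e ∧ ¬ ES.conflict e e'

/-- An event `e` is enabled at a configuration `c`. -/
abbrev Enabled (c : ES.Config) (e : E) : Prop := ∃ c' : ES.Config, ES.Extends c c' e

end EventStructure

/-- The metric interval `I(u,v)` between two vertices of a graph. -/
abbrev mInterval {V : Type*} (G : SimpleGraph V) (u v : V) : Set V :=
  {x | G.dist u x + G.dist x v = G.dist u v}

open Classical in
/-- The label of the edge between two configurations (label of the unique event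
in their symmetric difference). -/
noncomputable def stepLabel {E A : Type*} [Nonempty A] (lab : E → A)
    (c c' : Finset E) : A :=
  if h : ∃ e, (e ∈ c' ∧ e ∉ c) ∨ (e ∈ c ∧ e ∉ c') then lab h.choose
  else Classical.arbitrary A

/-- The word `σ(π)` of labels read along a walk of the domain graph. -/
noncomputable def walkWord {E A : Type*} [Nonempty A] {ES : EventStructure E}
    (lab : E → A) {c c' : ES.Config} (p : ES.configGraph.Walk c c') : List A :=
  p.darts.map fun d => stepLabel lab d.toProd.1.1 d.toProd.2.1

/-- One elementary commutation step on words: exchange two adjacent independent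
letters. -/
inductive SwapStep {A : Type*} (I : A → A → Prop) : List A → List A → Prop
  | swap (u v : List A) (a b : A) (h : I a b) :
      SwapStep I (u ++ a :: b :: v) (u ++ b :: a :: v)

/-- Mazurkiewicz trace equivalence `~_I`: the reflexive-transitive closure of
elementary commutations. -/
abbrev TraceEquiv {A : Type*} (I : A → A → Prop) : List A → List A → Prop :=
  Relation.ReflTransGen (SwapStep I)

/-- `(ES, lab)` is an `M`-labeled event structure over the trace alphabet
`M = (A, I)` (axioms (LES1)-(LES3)). -/
structure IsTraceLabeling {E A : Type*} (ES : EventStructure E)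
    (I : A → A → Prop) (lab : E → A) : Prop where
  les1 : ∀ e e', ES.MinConflict e e' → lab e ≠ lab e'
  les2 : ∀ e e', ES.ImmPred e e' ∨ ES.MinConflict e e' → ¬ I (lab e) (lab e')
  les3 : ∀ e e', ¬ I (lab e) (lab e') → ES.le e e' ∨ ES.le e' e ∨ ES.conflict e e'

/-- A graph is hyperbolic: the Gromov four-point condition holds for some
constant `δ`. -/
abbrev GraphHyperbolic {V : Type*} (G : SimpleGraph V) : Prop :=
  ∃ δ : ℕ, ∀ a b c d : V,
    G.dist a b + G.dist c d ≤
      max (G.dist a c + G.dist b d) (G.dist a d + G.dist b c) + 2 * δ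

/-- Strict causality. -/
abbrev EventStructure.lt' {E : Type*} (ES : EventStructure E) (e e' : E) : Prop :=
  ES.le e e' ∧ e ≠ e'

/-- An event structure is grid-free (in the sense of Thiagarajan–Yang). -/
abbrev GridFree {E : Type*} (ES : EventStructure E) : Prop :=
  ¬ ∃ (x y : ℕ → E) (g : ℕ → ℕ → E),
      (∀ i, ES.lt' (x i) (x (i + 1))) ∧
      (∀ j, ES.lt' (y j) (y (j + 1))) ∧
      (∀ i j, x i ≠ y j) ∧
      (∀ i j, ES.Concurrent (x i) (y j)) ∧
      (∀ i j i' j', g i j = g i' j' → i = i' ∧ j = j') ∧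
      (∀ i j i', g i j ≠ x i') ∧
      (∀ i j j', g i j ≠ y j') ∧
      (∀ i j, ES.lt' (x i) (g i j) ∧ ES.lt' (y j) (g i j)) ∧
      (∀ i j i', i < i' → ¬ ES.lt' (x i') (g i j)) ∧
      (∀ i j j', j < j' → ¬ ES.lt' (y j') (g i j))

namespace StmtAux

open Finset
open scoped Classical

variable {E : Type*} (ES : EventStructure E)

/-- The set of causes of an event, as a `Finset`. -/
noncomputable def dn (x : E) : Finset E := (ES.finite_cause x).toFinset

variable {ES}

lemma mem_down {x e : E} : e ∈ dn ES x ↔ ES.le e x := by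
  simp [StmtAux.dn]

lemma self_mem_down (x : E) : x ∈ dn ES x := mem_down.mpr (ES.le_refl x)

lemma down_isConfig (x : E) : ES.IsConfig (dn ES x) := by
  constructor
  · intro e he e' hle
    exact mem_down.mpr (ES.le_trans _ _ _ hle (mem_down.mp he))
  · intro e he e' he' hc
    have h1 : ES.conflict e x := ES.conflict_le _ _ _ hc (mem_down.mp he')
    have h2 : ES.conflict x x := ES.conflict_le _ _ _ (ES.conflict_symm _ _ h1) (mem_down.mp he)
    exact ES.conflict_irrefl x h2

/-- For concurrent events, the union of their cause sets is conflict-free. -/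
lemma concurrent_union_cf {x y : E} (h : ES.Concurrent x y) :
    ∀ a ∈ dn ES x ∪ dn ES y, ∀ b ∈ dn ES x ∪ dn ES y, ¬ ES.conflict a b := by
  have key : ∀ u v : E, ES.Concurrent u v → ∀ a b, ES.le a u → ES.le b v →
      ¬ ES.conflict a b := by
    intro u v huv a b ha hb hab
    have h1 : ES.conflict a v := ES.conflict_le _ _ _ hab hb
    have h2 : ES.conflict v u := ES.conflict_le _ _ _ (ES.conflict_symm _ _ h1) ha
    exact huv.2.2 (ES.conflict_symm _ _ h2)
  have hxx : ∀ u : E, ∀ a b, ES.le a u → ES.le b u → ¬ ES.conflict a b := by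
    intro u a b ha hb hab
    have h1 : ES.conflict a u := ES.conflict_le _ _ _ hab hb
    have h2 : ES.conflict u u := ES.conflict_le _ _ _ (ES.conflict_symm _ _ h1) ha
    exact ES.conflict_irrefl u h2
  intro a ha b hb
  have hsym : ES.Concurrent y x := ⟨h.2.1, h.1, fun hc => h.2.2 (ES.conflict_symm _ _ hc)⟩
  rcases Finset.mem_union.mp ha with ha | ha <;> rcases Finset.mem_union.mp hb with hb | hb
  · exact hxx x _ _ (mem_down.mp ha) (mem_down.mp hb)
  · exact key x y h _ _ (mem_down.mp ha) (mem_down.mp hb)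
  · exact key y x hsym _ _ (mem_down.mp ha) (mem_down.mp hb)
  · exact hxx y _ _ (mem_down.mp ha) (mem_down.mp hb)

lemma extends_eq {c c' : ES.Config} {e : E} (h : ES.Extends c c' e) :
    c'.1 = insert e c.1 := by
  ext z; rw [h.2 z, Finset.mem_insert]

lemma extends_mem {c c' : ES.Config} {e : E} (h : ES.Extends c c' e) : e ∈ c'.1 :=
  (h.2 e).mpr (Or.inl rfl)

lemma extends_subset {c c' : ES.Config} {e : E} (h : ES.Extends c c' e) : c.1 ⊆ c'.1 :=
  fun z hz => (h.2 z).mpr (Or.inr hz)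

/-- From a configuration `W` strictly containing a downward-closed `V`, one can
remove a single event staying above `V`. -/
lemma exists_cover_erase (W : ES.Config) (V : Finset E) (hsub : V ⊆ W.1)
    (hdc : ∀ e ∈ V, ∀ e', ES.le e' e → e' ∈ V) (hne : W.1 ≠ V) :
    ∃ (e : E) (W' : ES.Config), W'.1 = W.1.erase e ∧ e ∈ W.1 ∧ e ∉ V ∧
      V ⊆ W'.1 ∧ ES.Extends W' W e := by
  have hne' : (W.1 \ V).Nonempty := by
    rcases Finset.sdiff_nonempty.mpr (fun hsub' => hne (le_antisymm hsub' hsub)) with ⟨e, he⟩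
    exact ⟨e, he⟩
  obtain ⟨e, heme, hmax⟩ := Finset.exists_max_image (W.1 \ V) (fun z => (dn ES z).card) hne'
  have heW : e ∈ W.1 := (Finset.mem_sdiff.mp heme).1
  have heV : e ∉ V := (Finset.mem_sdiff.mp heme).2
  -- e is maximal in W: nothing in W is strictly above e
  have hemax : ∀ f ∈ W.1, ES.le e f → f = e := by
    intro f hf hle
    by_contra hfe
    have hfV : f ∉ V := fun hfV => heV (hdc f hfV e hle)
    have hsubd : dn ES e ⊆ dn ES f := by
      intro z hz; exact mem_down.mpr (ES.le_trans _ _ _ (mem_down.mp hz) hle)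
    have hfd : f ∈ dn ES f := self_mem_down f
    have hfnd : f ∉ dn ES e := by
      intro hfd'
      exact hfe (ES.le_antisymm _ _ (mem_down.mp hfd') hle)
    have : (dn ES e).card < (dn ES f).card :=
      Finset.card_lt_card (Finset.ssubset_iff_of_subset hsubd |>.mpr ⟨f, hfd, hfnd⟩)
    have := hmax f (Finset.mem_sdiff.mpr ⟨hf, hfV⟩)
    omega
  have hW' : ES.IsConfig (W.1.erase e) := by
    constructor
    · intro a ha a' hle
      have haW : a ∈ W.1 := Finset.mem_of_mem_erase ha
      have ha'W : a' ∈ W.1 := W.2.1 a haW a' hle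
      refine Finset.mem_erase.mpr ⟨?_, ha'W⟩
      intro h
      subst h
      exact (Finset.mem_erase.mp ha).1 (hemax a haW hle)
    · intro a ha b hb
      exact W.2.2 a (Finset.mem_of_mem_erase ha) b (Finset.mem_of_mem_erase hb)
  refine ⟨e, ⟨W.1.erase e, hW'⟩, rfl, heW, heV, ?_, ?_, ?_⟩
  · intro z hz
    exact Finset.mem_erase.mpr ⟨fun h => heV (h ▸ hz), hsub hz⟩
  · exact Finset.notMem_erase e W.1
  · intro z
    constructor
    · intro hz
      by_cases hze : z = e
      · exact Or.inl hze
      · exact Or.inr (Finset.mem_erase.mpr ⟨hze, hz⟩)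
    · rintro (rfl | hz)
      · exact heW
      · exact Finset.mem_of_mem_erase hz

end StmtAux
namespace StmtAux

open Finset
open scoped Classical

variable {E : Type*} {ES : EventStructure E}

lemma inter_isConfig (c c' : ES.Config) : ES.IsConfig (c.1 ∩ c'.1) := by
  constructor
  · intro e he e' hle
    have h1 := c.2.1 e (Finset.mem_inter.mp he).1 e' hle
    have h2 := c'.2.1 e (Finset.mem_inter.mp he).2 e' hle
    exact Finset.mem_inter.mpr ⟨h1, h2⟩
  · intro a ha b hb
    exact c.2.2 a (Finset.mem_inter.mp ha).1 b (Finset.mem_inter.mp hb).1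

/-- A walk from a configuration down to a sub-configuration. -/
lemma walk_of_subset (c c' : ES.Config) (h : c'.1 ⊆ c.1) :
    ∃ p : ES.configGraph.Walk c c', p.length = (c.1 \ c'.1).card := by
  generalize hn : (c.1 \ c'.1).card = n
  induction n generalizing c with
  | zero =>
    have : c.1 = c'.1 := by
      have h0 : c.1 \ c'.1 = ∅ := Finset.card_eq_zero.mp hn
      apply le_antisymm _ h
      intro z hz
      by_contra hz'
      have : z ∈ c.1 \ c'.1 := Finset.mem_sdiff.mpr ⟨hz, hz'⟩
      simp [h0] at this
    have : c = c' := Subtype.ext this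
    subst this
    exact ⟨SimpleGraph.Walk.nil, rfl⟩
  | succ n ih =>
    have hne : c.1 ≠ c'.1 := by
      intro hEq
      rw [hEq] at hn
      simp at hn
    obtain ⟨e, W', hW'eq, heW, heV, hVsub, hext⟩ :=
      exists_cover_erase c c'.1 h (fun a ha a' hle => c'.2.1 a ha a' hle) hne
    have hadj : ES.configGraph.Adj c W' := Or.inr ⟨e, hext⟩
    have hcard : (W'.1 \ c'.1).card = n := by
      rw [hW'eq]
      have heq : c.1.erase e \ c'.1 = (c.1 \ c'.1).erase e := by
        ext z
        simp only [Finset.mem_erase, Finset.mem_sdiff]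
        tauto
      rw [heq, Finset.card_erase_of_mem (Finset.mem_sdiff.mpr ⟨heW, heV⟩), hn]
      omega
    obtain ⟨p, hp⟩ := ih W' hVsub hcard
    exact ⟨SimpleGraph.Walk.cons hadj p, by simp [hp]⟩

end StmtAux
namespace StmtAux

open Finset
open scoped Classical
open scoped symmDiff

variable {E : Type*} {ES : EventStructure E}

lemma adj_symmDiff_card {a b : ES.Config} (h : ES.configGraph.Adj a b) :
    (a.1 ∆ b.1).card = 1 := by
  have key : ∀ u v : ES.Config, ∀ e, ES.Extends u v e → (u.1 ∆ v.1).card = 1 := by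
    intro u v e he
    have hv : v.1 = insert e u.1 := extends_eq he
    have : u.1 ∆ v.1 = {e} := by
      rw [hv]
      ext z
      simp only [symmDiff_def, Finset.sup_eq_union, Finset.mem_union, Finset.mem_sdiff,
        Finset.mem_insert, Finset.mem_singleton]
      constructor
      · rintro (⟨hz, hz'⟩ | ⟨hz, hz'⟩)
        · exact absurd (Or.inr hz) hz'
        · rcases hz with rfl | hz
          · rfl
          · exact absurd hz hz'
      · rintro rfl
        exact Or.inr ⟨Or.inl rfl, he.1⟩
    rw [this, Finset.card_singleton]
  rcases h with ⟨e, he⟩ | ⟨e, he⟩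
  · exact key a b e he
  · rw [symmDiff_comm]
    exact key b a e he

lemma symmDiff_card_le_length {a b : ES.Config} (p : ES.configGraph.Walk a b) :
    (a.1 ∆ b.1).card ≤ p.length := by
  induction p with
  | nil => simp
  | @cons u v w h p ih =>
    have htri : u.1 ∆ w.1 ⊆ (u.1 ∆ v.1) ∪ (v.1 ∆ w.1) := by
      have := symmDiff_triangle u.1 v.1 w.1
      simpa [Finset.sup_eq_union] using this
    calc (u.1 ∆ w.1).card ≤ ((u.1 ∆ v.1) ∪ (v.1 ∆ w.1)).card := Finset.card_le_card htri
      _ ≤ (u.1 ∆ v.1).card + (v.1 ∆ w.1).card := Finset.card_union_le _ _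
      _ ≤ 1 + p.length := by
          have := adj_symmDiff_card h
          omega
      _ = (SimpleGraph.Walk.cons h p).length := by simp [Nat.add_comm]

lemma symmDiff_card_eq {a b : ES.Config} :
    (a.1 ∆ b.1).card = (a.1 \ b.1).card + (b.1 \ a.1).card := by
  rw [symmDiff_def, Finset.sup_eq_union, Finset.card_union_of_disjoint disjoint_sdiff_sdiff]

lemma reachable_all (a b : ES.Config) : ES.configGraph.Reachable a b := by
  obtain ⟨p, _⟩ := walk_of_subset a ⟨a.1 ∩ b.1, inter_isConfig a b⟩ Finset.inter_subset_left
  obtain ⟨q, _⟩ := walk_of_subset b ⟨a.1 ∩ b.1, inter_isConfig a b⟩ Finset.inter_subset_right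
  exact ⟨p.append q.reverse⟩

lemma dist_lower (a b : ES.Config) : (a.1 ∆ b.1).card ≤ ES.configGraph.dist a b := by
  obtain ⟨p, hp⟩ := (reachable_all a b).exists_walk_length_eq_dist
  rw [← hp]
  exact symmDiff_card_le_length p

lemma dist_eq_of_subset {a b : ES.Config} (h : b.1 ⊆ a.1) :
    ES.configGraph.dist a b = (a.1 \ b.1).card := by
  obtain ⟨p, hp⟩ := walk_of_subset a b h
  have hub := SimpleGraph.dist_le p
  have hlb := dist_lower a b
  have h0 : (b.1 \ a.1) = ∅ := Finset.sdiff_eq_empty_iff_subset.mpr h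
  have := symmDiff_card_eq (a := a) (b := b)
  rw [h0] at this
  simp at this
  omega

lemma dist_eq {a b : ES.Config} :
    ES.configGraph.dist a b = (a.1 \ b.1).card + (b.1 \ a.1).card := by
  obtain ⟨p, hp⟩ := walk_of_subset a ⟨a.1 ∩ b.1, inter_isConfig a b⟩ Finset.inter_subset_left
  obtain ⟨q, hq⟩ := walk_of_subset b ⟨a.1 ∩ b.1, inter_isConfig a b⟩ Finset.inter_subset_right
  have hub := SimpleGraph.dist_le (p.append q.reverse)
  rw [SimpleGraph.Walk.length_append, SimpleGraph.Walk.length_reverse, hp, hq] at hub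
  have hub2 : ES.configGraph.dist a b ≤
      (a.1 \ (a.1 ∩ b.1)).card + (b.1 \ (a.1 ∩ b.1)).card := hub
  have hlb := dist_lower a b
  rw [symmDiff_card_eq] at hlb
  have h1 : a.1 \ (a.1 ∩ b.1) = a.1 \ b.1 := Finset.sdiff_inter_self_left a.1 b.1
  have h2 : b.1 \ (a.1 ∩ b.1) = b.1 \ a.1 := by
    rw [Finset.inter_comm]
    exact Finset.sdiff_inter_self_left b.1 a.1
  rw [h1, h2] at hub2
  omega

end StmtAux
namespace StmtAux

open Finset
open scoped Classical

variable {E : Type*} {ES : EventStructure E} {d : ℕ}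

/-- The covers of a configuration form a set of at most `d` configurations. -/
lemma covers_finset
    (hdeg : ∀ (c : ES.Config) (s : Finset E), (∀ e ∈ s, ES.Enabled c e) → s.card ≤ d)
    (c : ES.Config) :
    ∃ t : Finset ES.Config, (∀ W, ES.Covers c W → W ∈ t) ∧ t.card ≤ d := by
  have hfin : {e | ES.Enabled c e}.Finite := by
    rw [← Set.not_infinite]
    intro hinf
    obtain ⟨t, hts, htc⟩ := hinf.exists_subset_card_eq (d + 1)
    have := hdeg c t (fun e he => hts he)
    omega
  refine ⟨hfin.toFinset.image (fun e => if h : ES.Enabled c e then h.choose else c), ?_, ?_⟩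
  · rintro W ⟨e, hext⟩
    have hen : ES.Enabled c e := ⟨W, hext⟩
    refine Finset.mem_image.mpr ⟨e, by simpa using hen, ?_⟩
    rw [dif_pos hen]
    have h1 := extends_eq hen.choose_spec
    have h2 := extends_eq hext
    exact Subtype.ext (h1.trans h2.symm)
  · calc _ ≤ hfin.toFinset.card := Finset.card_image_le
      _ ≤ d := hdeg c hfin.toFinset (fun e he => by simpa using he)

/-- Counting function: `extCount d s = 1 + d + d² + ⋯ + dˢ`. -/
def extCount (d : ℕ) : ℕ → ℕ
  | 0 => 1
  | s + 1 => d * extCount d s + 1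

/-- There are at most `extCount d s` configurations extending `V` by at most
`s` events. -/
lemma ext_finset
    (hdeg : ∀ (c : ES.Config) (s : Finset E), (∀ e ∈ s, ES.Enabled c e) → s.card ≤ d)
    (s : ℕ) (V : ES.Config) :
    ∃ F : Finset ES.Config,
      (∀ W : ES.Config, V.1 ⊆ W.1 → (W.1 \ V.1).card ≤ s → W ∈ F) ∧
      F.card ≤ extCount d s := by
  induction s with
  | zero =>
    refine ⟨{V}, ?_, (Finset.card_singleton V).le⟩
    intro W hsub hcard
    have h0 : W.1 \ V.1 = ∅ := Finset.card_eq_zero.mp (Nat.le_zero.mp hcard)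
    have hWV : W.1 = V.1 :=
      le_antisymm (Finset.sdiff_eq_empty_iff_subset.mp h0) hsub
    exact Finset.mem_singleton.mpr (Subtype.ext hWV)
  | succ s ih =>
    obtain ⟨F, hF, hFc⟩ := ih
    refine ⟨insert V (F.biUnion (fun W' => (covers_finset hdeg W').choose)), ?_, ?_⟩
    · intro W hsub hcard
      by_cases hWV : W.1 = V.1
      · exact Finset.mem_insert.mpr (Or.inl (Subtype.ext hWV))
      · obtain ⟨e, W', hW'eq, heW, heV, hVsub, hext⟩ :=
          exists_cover_erase W V.1 hsub (fun a ha a' hle => V.2.1 a ha a' hle) hWV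
        have hW'F : W' ∈ F := by
          apply hF W' hVsub
          have heq : W.1.erase e \ V.1 = (W.1 \ V.1).erase e := by
            ext z
            simp only [Finset.mem_erase, Finset.mem_sdiff]
            tauto
          rw [hW'eq, heq, Finset.card_erase_of_mem (Finset.mem_sdiff.mpr ⟨heW, heV⟩)]
          omega
        refine Finset.mem_insert.mpr (Or.inr (Finset.mem_biUnion.mpr ⟨W', hW'F, ?_⟩))
        exact (covers_finset hdeg W').choose_spec.1 W ⟨e, hext⟩
    · calc _ ≤ (F.biUnion (fun W' => (covers_finset hdeg W').choose)).card + 1 :=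
            Finset.card_insert_le _ _
        _ ≤ (∑ W' ∈ F, ((covers_finset hdeg W').choose).card) + 1 := by
            have := Finset.card_biUnion_le
              (s := F) (t := fun W' => (covers_finset hdeg W').choose)
            omega
        _ ≤ (∑ _W' ∈ F, d) + 1 := by
            have : ∀ W' ∈ F, ((covers_finset hdeg W').choose).card ≤ d :=
              fun W' _ => (covers_finset hdeg W').choose_spec.2
            have := Finset.sum_le_sum this
            omega
        _ ≤ d * extCount d s + 1 := by
            rw [Finset.sum_const, smul_eq_mul]
            have h := Nat.mul_le_mul_right d hFc
            rw [Nat.mul_comm (extCount d s) d] at h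
            omega
        _ = extCount d (s + 1) := rfl

end StmtAux
namespace StmtAux

open Finset
open scoped Classical

variable {E : Type*} {ES : EventStructure E} {d : ℕ}

/-- The configuration `↓v ∪ (↓u \ {u})` for concurrent events `u, v`. -/
lemma side_isConfig {u v : E} (h : ES.Concurrent u v) :
    ES.IsConfig (dn ES v ∪ (dn ES u).erase u) := by
  constructor
  · intro e he e' hle
    rcases Finset.mem_union.mp he with he | he
    · exact Finset.mem_union.mpr (Or.inl
        (mem_down.mpr (ES.le_trans _ _ _ hle (mem_down.mp he))))
    · have heu : ES.le e u := mem_down.mp (Finset.mem_of_mem_erase he)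
      have he'u : ES.le e' u := ES.le_trans _ _ _ hle heu
      refine Finset.mem_union.mpr (Or.inr (Finset.mem_erase.mpr ⟨?_, mem_down.mpr he'u⟩))
      rintro rfl
      exact (Finset.mem_erase.mp he).1 (ES.le_antisymm _ _ heu hle)
  · intro a ha b hb
    apply concurrent_union_cf h
    · rcases Finset.mem_union.mp ha with ha | ha
      · exact Finset.mem_union.mpr (Or.inr ha)
      · exact Finset.mem_union.mpr (Or.inl (Finset.mem_of_mem_erase ha))
    · rcases Finset.mem_union.mp hb with hb | hb
      · exact Finset.mem_union.mpr (Or.inr hb)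
      · exact Finset.mem_union.mpr (Or.inl (Finset.mem_of_mem_erase hb))

lemma union_isConfig {u v : E} (h : ES.Concurrent u v) :
    ES.IsConfig (dn ES u ∪ dn ES v) := by
  constructor
  · intro e he e' hle
    rcases Finset.mem_union.mp he with he | he
    · exact Finset.mem_union.mpr (Or.inl
        (mem_down.mpr (ES.le_trans _ _ _ hle (mem_down.mp he))))
    · exact Finset.mem_union.mpr (Or.inr
        (mem_down.mpr (ES.le_trans _ _ _ hle (mem_down.mp he))))
  · exact concurrent_union_cf h

/-- `u` is enabled at the configuration `↓v ∪ (↓u \ {u})`. -/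
lemma side_enabled {u v : E} (h : ES.Concurrent u v) :
    ES.Enabled (⟨dn ES v ∪ (dn ES u).erase u, side_isConfig h⟩ : ES.Config) u := by
  refine ⟨⟨dn ES u ∪ dn ES v, union_isConfig h⟩, ?_, ?_⟩
  · intro hu
    rcases Finset.mem_union.mp hu with hu | hu
    · exact h.1 (mem_down.mp hu)
    · exact (Finset.mem_erase.mp hu).1 rfl
  · intro z
    simp only [Finset.mem_union, Finset.mem_erase, mem_down]
    constructor
    · rintro (hz | hz)
      · by_cases hzu : z = u
        · exact Or.inl hzu
        · exact Or.inr (Or.inr ⟨hzu, hz⟩)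
      · exact Or.inr (Or.inl hz)
    · rintro (rfl | hz | ⟨_, hz⟩)
      · exact Or.inl (ES.le_refl _)
      · exact Or.inr hz
      · exact Or.inl hz

/-- Core counting lemma: for a fixed `v`, there are at most `d * extCount d m`
events `u` (taken from an injective family, concurrent to `v`) whose cause set
sticks out of `↓v` by fewer than `m` events. -/
lemma count_close
    (hdeg : ∀ (c : ES.Config) (s : Finset E), (∀ e ∈ s, ES.Enabled c e) → s.card ≤ d)
    (m : ℕ) (v : E) {N : ℕ} (x : Fin N → E) (hxinj : Function.Injective x)
    (hconc : ∀ i, ES.Concurrent (x i) v) :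
    (Finset.univ.filter (fun i : Fin N => ((dn ES (x i)) \ (dn ES v)).card < m)).card ≤
      d * extCount d m := by
  classical
  set I := Finset.univ.filter (fun i : Fin N => ((dn ES (x i)) \ (dn ES v)).card < m) with hI
  obtain ⟨F, hF, hFc⟩ := ext_finset hdeg m (⟨dn ES v, down_isConfig v⟩ : ES.Config)
  set f : Fin N → ES.Config :=
    fun i => ⟨dn ES v ∪ (dn ES (x i)).erase (x i), side_isConfig (hconc i)⟩ with hf
  have himg : I.image f ⊆ F := by
    intro W hW
    obtain ⟨i, hi, rfl⟩ := Finset.mem_image.mp hW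
    have hbad : ((dn ES (x i)) \ (dn ES v)).card < m := by
      simpa [hI] using hi
    apply hF
    · exact fun z hz => Finset.mem_union.mpr (Or.inl hz)
    · show ((f i).1 \ dn ES v).card ≤ m
      have hsub : (f i).1 \ dn ES v ⊆ ((dn ES (x i)) \ (dn ES v)) := by
        intro z hz
        rcases Finset.mem_sdiff.mp hz with ⟨hz1, hz2⟩
        rcases Finset.mem_union.mp hz1 with hz1 | hz1
        · exact absurd hz1 hz2
        · exact Finset.mem_sdiff.mpr ⟨Finset.mem_of_mem_erase hz1, hz2⟩
      have := Finset.card_le_card hsub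
      omega
  have hfib : ∀ W ∈ I.image f, (I.filter (fun i => f i = W)).card ≤ d := by
    intro W _
    set J := I.filter (fun i => f i = W) with hJ
    have : ∀ e ∈ J.image x, ES.Enabled W e := by
      intro e he
      obtain ⟨i, hi, rfl⟩ := Finset.mem_image.mp he
      have hfi : f i = W := (Finset.mem_filter.mp hi).2
      rw [← hfi]
      exact side_enabled (hconc i)
    have h1 := hdeg W (J.image x) this
    rwa [Finset.card_image_of_injective _ hxinj] at h1
  calc I.card ≤ d * (I.image f).card := Finset.card_le_mul_card_image I d hfib
    _ ≤ d * extCount d m := by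
        have := Finset.card_le_card himg
        exact Nat.mul_le_mul_left d (le_trans this hFc)

/-- From arbitrarily large cross-concurrent families we extract a concurrent
pair whose cause sets differ a lot in both directions. -/
lemma exists_far_pair
    (hdeg : ∀ (c : ES.Config) (s : Finset E), (∀ e ∈ s, ES.Enabled c e) → s.card ≤ d)
    (m : ℕ)
    (hyp : ∀ n : ℕ, ∃ x y : Fin n → E, Function.Injective x ∧ Function.Injective y ∧
        (∀ i j, x i ≠ y j) ∧ ∀ i j, ES.Concurrent (x i) (y j)) :
    ∃ u v : E, ES.Concurrent u v ∧
      m ≤ ((dn ES u) \ (dn ES v)).card ∧ m ≤ ((dn ES v) \ (dn ES u)).card := by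
  classical
  set K := d * extCount d m with hK
  set N := 2 * K + 1 with hN
  obtain ⟨x, y, hxinj, hyinj, hxyne, hconc⟩ := hyp N
  by_contra hcon
  push_neg at hcon
  have hbad : ∀ i j : Fin N, ((dn ES (x i)) \ (dn ES (y j))).card < m ∨
      ((dn ES (y j)) \ (dn ES (x i))).card < m := by
    intro i j
    by_contra hb
    push_neg at hb
    exact absurd hb.2 (not_le.mpr (by
      have := hcon (x i) (y j) (hconc i j) hb.1
      omega))
  -- count pairs
  set S1 := Finset.univ.filter
    (fun p : Fin N × Fin N => ((dn ES (x p.1)) \ (dn ES (y p.2))).card < m) with hS1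
  set S2 := Finset.univ.filter
    (fun p : Fin N × Fin N => ((dn ES (y p.2)) \ (dn ES (x p.1))).card < m) with hS2
  have hcover : (Finset.univ : Finset (Fin N × Fin N)) ⊆ S1 ∪ S2 := by
    intro p _
    rcases hbad p.1 p.2 with h | h
    · exact Finset.mem_union.mpr (Or.inl (Finset.mem_filter.mpr ⟨Finset.mem_univ _, h⟩))
    · exact Finset.mem_union.mpr (Or.inr (Finset.mem_filter.mpr ⟨Finset.mem_univ _, h⟩))
  have hS1card : S1.card ≤ N * K := by
    have hfw : ∀ p ∈ S1, Prod.snd p ∈ (Finset.univ : Finset (Fin N)) :=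
      fun p _ => Finset.mem_univ _
    rw [Finset.card_eq_sum_card_fiberwise hfw]
    have hboundj : ∀ j : Fin N, (S1.filter (fun p => p.2 = j)).card ≤ K := by
      intro j
      have hinj2 : (S1.filter (fun p => p.2 = j)).card ≤
          (Finset.univ.filter (fun i : Fin N =>
            ((dn ES (x i)) \ (dn ES (y j))).card < m)).card := by
        apply Finset.card_le_card_of_injOn (fun p => p.1)
        · intro p hp
          rcases Finset.mem_filter.mp hp with ⟨hp1, hp2⟩
          rcases Finset.mem_filter.mp hp1 with ⟨_, hp3⟩
          subst hp2
          exact Finset.mem_filter.mpr ⟨Finset.mem_univ _, hp3⟩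
        · intro p hp q hq hpq
          rcases Finset.mem_filter.mp hp with ⟨_, hp2⟩
          rcases Finset.mem_filter.mp hq with ⟨_, hq2⟩
          exact Prod.ext hpq (hp2.trans hq2.symm)
      calc (S1.filter (fun p => p.2 = j)).card ≤ _ := hinj2
        _ ≤ K := count_close hdeg m (y j) x hxinj (fun i => hconc i j)
    calc ∑ j ∈ Finset.univ, (S1.filter (fun p => p.2 = j)).card
        ≤ ∑ _j ∈ (Finset.univ : Finset (Fin N)), K := Finset.sum_le_sum (fun j _ => hboundj j)
      _ = N * K := by rw [Finset.sum_const, smul_eq_mul, Finset.card_univ, Fintype.card_fin]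
  have hS2card : S2.card ≤ N * K := by
    have hfw : ∀ p ∈ S2, Prod.fst p ∈ (Finset.univ : Finset (Fin N)) :=
      fun p _ => Finset.mem_univ _
    rw [Finset.card_eq_sum_card_fiberwise hfw]
    have hboundi : ∀ i : Fin N, (S2.filter (fun p => p.1 = i)).card ≤ K := by
      intro i
      have hinj2 : (S2.filter (fun p => p.1 = i)).card ≤
          (Finset.univ.filter (fun j : Fin N =>
            ((dn ES (y j)) \ (dn ES (x i))).card < m)).card := by
        apply Finset.card_le_card_of_injOn (fun p => p.2)
        · intro p hp
          rcases Finset.mem_filter.mp hp with ⟨hp1, hp2⟩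
          rcases Finset.mem_filter.mp hp1 with ⟨_, hp3⟩
          subst hp2
          exact Finset.mem_filter.mpr ⟨Finset.mem_univ _, hp3⟩
        · intro p hp q hq hpq
          rcases Finset.mem_filter.mp hp with ⟨_, hp2⟩
          rcases Finset.mem_filter.mp hq with ⟨_, hq2⟩
          exact Prod.ext (hp2.trans hq2.symm) hpq
      have hcsym : ∀ j : Fin N, ES.Concurrent (y j) (x i) := by
        intro j
        obtain ⟨h1, h2, h3⟩ := hconc i j
        exact ⟨h2, h1, fun hc => h3 (ES.conflict_symm _ _ hc)⟩
      calc (S2.filter (fun p => p.1 = i)).card ≤ _ := hinj2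
        _ ≤ K := count_close hdeg m (x i) y hyinj hcsym
    calc ∑ i ∈ Finset.univ, (S2.filter (fun p => p.1 = i)).card
        ≤ ∑ _i ∈ (Finset.univ : Finset (Fin N)), K := Finset.sum_le_sum (fun i _ => hboundi i)
      _ = N * K := by rw [Finset.sum_const, smul_eq_mul, Finset.card_univ, Fintype.card_fin]
  have htotal : N * N ≤ S1.card + S2.card := by
    calc N * N = (Finset.univ : Finset (Fin N × Fin N)).card := by
          rw [Finset.card_univ]; simp
      _ ≤ (S1 ∪ S2).card := Finset.card_le_card hcover
      _ ≤ S1.card + S2.card := Finset.card_union_le _ _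
  have hNpos : 0 < N := by omega
  have : N * N ≤ 2 * (N * K) := by omega
  have : N ≤ 2 * K := by
    by_contra hh
    push_neg at hh
    nlinarith
  omega

end StmtAux
namespace StmtAux

open Finset
open scoped Classical

variable {E : Type*} {ES : EventStructure E} {d : ℕ}

lemma part2
    (hdeg : ∀ (c : ES.Config) (s : Finset E), (∀ e ∈ s, ES.Enabled c e) → s.card ≤ d)
    (hyp : ∀ n : ℕ, ∃ x y : Fin n → E, Function.Injective x ∧ Function.Injective y ∧
        (∀ i j, x i ≠ y j) ∧ ∀ i j, ES.Concurrent (x i) (y j)) :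
    ¬ GraphHyperbolic ES.configGraph := by
  rintro ⟨δ, hδ⟩
  obtain ⟨u, v, huv, hp, hq⟩ := exists_far_pair hdeg (δ + 1) hyp
  set A := dn ES u with hA
  set B := dn ES v with hB
  set P : ES.Config := ⟨A, down_isConfig u⟩ with hP
  set Q : ES.Config := ⟨B, down_isConfig v⟩ with hQ
  set M : ES.Config := ⟨A ∩ B, inter_isConfig P Q⟩ with hM
  set J : ES.Config := ⟨A ∪ B, union_isConfig huv⟩ with hJ
  -- set identities
  have i1 : (A ∩ B) \ (A ∪ B) = ∅ := by
    ext z; simp only [Finset.mem_sdiff, Finset.mem_inter, Finset.mem_union,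
      Finset.notMem_empty, iff_false]; tauto
  have i2 : ((A ∪ B) \ (A ∩ B)).card = (A \ B).card + (B \ A).card := by
    have : (A ∪ B) \ (A ∩ B) = (A \ B) ∪ (B \ A) := by
      ext z; simp only [Finset.mem_sdiff, Finset.mem_inter, Finset.mem_union]; tauto
    rw [this, Finset.card_union_of_disjoint disjoint_sdiff_sdiff]
  have i3 : A \ (A ∩ B) = A \ B := Finset.sdiff_inter_self_left A B
  have i4 : B \ (A ∩ B) = B \ A := by
    rw [Finset.inter_comm]; exact Finset.sdiff_inter_self_left B A
  have i5 : (A ∪ B) \ B = A \ B := by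
    ext z; simp only [Finset.mem_sdiff, Finset.mem_union]; tauto
  have i6 : (A ∪ B) \ A = B \ A := by
    ext z; simp only [Finset.mem_sdiff, Finset.mem_union]; tauto
  have i7 : (A ∩ B) \ A = ∅ := by
    ext z; simp only [Finset.mem_sdiff, Finset.mem_inter, Finset.notMem_empty, iff_false]; tauto
  have i8 : (A ∩ B) \ B = ∅ := by
    ext z; simp only [Finset.mem_sdiff, Finset.mem_inter, Finset.notMem_empty, iff_false]; tauto
  have i9 : A \ (A ∪ B) = ∅ := by
    ext z; simp only [Finset.mem_sdiff, Finset.mem_union, Finset.notMem_empty, iff_false]; tauto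
  have i10 : B \ (A ∪ B) = ∅ := by
    ext z; simp only [Finset.mem_sdiff, Finset.mem_union, Finset.notMem_empty, iff_false]; tauto
  -- distances
  have dMJ : ES.configGraph.dist M J = ((A ∩ B) \ (A ∪ B)).card + ((A ∪ B) \ (A ∩ B)).card :=
    dist_eq
  have dPQ : ES.configGraph.dist P Q = (A \ B).card + (B \ A).card := dist_eq
  have dMP : ES.configGraph.dist M P = ((A ∩ B) \ A).card + (A \ (A ∩ B)).card := dist_eq
  have dMQ : ES.configGraph.dist M Q = ((A ∩ B) \ B).card + (B \ (A ∩ B)).card := dist_eq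
  have dJP : ES.configGraph.dist J P = ((A ∪ B) \ A).card + (A \ (A ∪ B)).card := dist_eq
  have dJQ : ES.configGraph.dist J Q = ((A ∪ B) \ B).card + (B \ (A ∪ B)).card := dist_eq
  rw [i1, i2] at dMJ
  rw [i7, i3] at dMP
  rw [i8, i4] at dMQ
  rw [i6, i9] at dJP
  rw [i5, i10] at dJQ
  have hfour := hδ M J P Q
  rw [dMJ, dPQ, dMP, dMQ, dJP, dJQ] at hfour
  simp only [Finset.card_empty] at hfour
  omega

end StmtAux
namespace StmtAux

open Finset

variable {E : Type*} {ES : EventStructure E}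

lemma part1 {n : ℕ} (f : Fin (n + 1) × Fin (n + 1) → ES.Config)
    (hdist : ∀ p q : Fin (n + 1) × Fin (n + 1),
        ES.configGraph.dist (f p) (f q) =
          (max (p.1 : ℕ) (q.1 : ℕ) - min (p.1 : ℕ) (q.1 : ℕ)) +
          (max (p.2 : ℕ) (q.2 : ℕ) - min (p.2 : ℕ) (q.2 : ℕ)))
    (hH : ∀ (i : Fin n) (j : Fin (n + 1)), ∃ e,
        ES.Extends (f (i.castSucc, j)) (f (i.succ, j)) e)
    (hV : ∀ (i : Fin (n + 1)) (j : Fin n), ∃ e,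
        ES.Extends (f (i, j.castSucc)) (f (i, j.succ)) e) :
    ∃ x y : Fin n → E, Function.Injective x ∧ Function.Injective y ∧
      (∀ i j, x i ≠ y j) ∧
      (∀ i j, ¬ ES.conflict (x i) (x j)) ∧
      (∀ i j, ¬ ES.conflict (y i) (y j)) ∧
      ∀ i j, ES.Concurrent (x i) (y j) := by
  classical
  set x : Fin n → E := fun i => (hH i 0).choose with hx
  set y : Fin n → E := fun j => (hV 0 j).choose with hy
  -- the two antidiagonal corners of a unit square are distinct configurations
  have hne : ∀ (i : Fin n) (j : Fin n), f (i.succ, j.castSucc) ≠ f (i.castSucc, j.succ) := by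
    intro i j heq
    have h := hdist (i.succ, j.castSucc) (i.castSucc, j.succ)
    rw [heq, SimpleGraph.dist_self] at h
    simp only [Fin.val_succ, Fin.coe_castSucc] at h
    omega
  -- horizontal labels are constant along columns
  have hHc : ∀ (i : Fin n) (j : Fin (n + 1)),
      ES.Extends (f (i.castSucc, j)) (f (i.succ, j)) (x i) := by
    intro i
    refine Fin.induction ?_ ?_
    · exact (hH i 0).choose_spec
    · intro j ih
      obtain hb := (hV i.castSucc j).choose_spec
      obtain ha' := (hH i j.succ).choose_spec
      set b := (hV i.castSucc j).choose
      set a' := (hH i j.succ).choose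
      have hab : x i ≠ b := by
        intro hEq
        apply hne i j
        apply Subtype.ext
        rw [extends_eq ih, extends_eq hb, hEq]
      have hmem : x i ∈ (f (i.succ, j.succ)).1 :=
        extends_subset (hV i.succ j).choose_spec (extends_mem ih)
      have h1 := (ha'.2 (x i)).mp hmem
      rcases h1 with h1 | h1
      · rw [← h1] at ha'
        exact ha'
      · rcases (hb.2 (x i)).mp h1 with h2 | h2
        · exact absurd h2 hab
        · exact absurd h2 ih.1
  -- vertical labels are constant along rows
  have hVc : ∀ (i : Fin (n + 1)) (j : Fin n),
      ES.Extends (f (i, j.castSucc)) (f (i, j.succ)) (y j) := by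
    intro i j
    induction i using Fin.induction with
    | zero => exact (hV 0 j).choose_spec
    | succ i ih =>
      obtain ha := (hH i j.castSucc).choose_spec
      obtain hb' := (hV i.succ j).choose_spec
      set a := (hH i j.castSucc).choose
      set b' := (hV i.succ j).choose
      have hab : y j ≠ a := by
        intro hEq
        apply hne i j
        apply Subtype.ext
        rw [extends_eq ha, extends_eq ih, hEq]
      have hmem : y j ∈ (f (i.succ, j.succ)).1 :=
        extends_subset (hH i j.succ).choose_spec (extends_mem ih)
      have h1 := (hb'.2 (y j)).mp hmem
      rcases h1 with h1 | h1
      · rw [← h1] at hb'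
        exact hb'
      · rcases (ha.2 (y j)).mp h1 with h2 | h2
        · exact absurd h2 hab
        · exact absurd h2 ih.1
  -- rows are monotone
  have hmrow : ∀ (j : Fin (n + 1)) (i i' : Fin (n + 1)), i ≤ i' →
      (f (i, j)).1 ⊆ (f (i', j)).1 := by
    intro j i i'
    induction i' using Fin.induction with
    | zero =>
      intro h
      have : i = 0 := le_antisymm h (Fin.zero_le i)
      subst this
      exact subset_rfl
    | succ i' ih =>
      intro h
      by_cases hcase : i = i'.succ
      · subst hcase; exact subset_rfl
      · have hle : i ≤ i'.castSucc := by
          have h1 : (i : ℕ) ≤ (i' : ℕ) + 1 := by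
            simpa [Fin.le_def, Fin.val_succ] using h
          have h2 : (i : ℕ) ≠ (i' : ℕ) + 1 := by
            intro hEq
            apply hcase
            apply Fin.ext
            simpa [Fin.val_succ] using hEq
          simp only [Fin.le_def, Fin.coe_castSucc]
          omega
        exact (ih hle).trans (extends_subset (hHc i' j))
  -- columns are monotone
  have hmcol : ∀ (i : Fin (n + 1)) (j j' : Fin (n + 1)), j ≤ j' →
      (f (i, j)).1 ⊆ (f (i, j')).1 := by
    intro i j j'
    induction j' using Fin.induction with
    | zero =>
      intro h
      have : j = 0 := le_antisymm h (Fin.zero_le j)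
      subst this
      exact subset_rfl
    | succ j' ih =>
      intro h
      by_cases hcase : j = j'.succ
      · subst hcase; exact subset_rfl
      · have hle : j ≤ j'.castSucc := by
          have h1 : (j : ℕ) ≤ (j' : ℕ) + 1 := by
            simpa [Fin.le_def, Fin.val_succ] using h
          have h2 : (j : ℕ) ≠ (j' : ℕ) + 1 := by
            intro hEq
            apply hcase
            apply Fin.ext
            simpa [Fin.val_succ] using hEq
          simp only [Fin.le_def, Fin.coe_castSucc]
          omega
        exact (ih hle).trans (extends_subset (hVc i j'))
  -- basic membership facts
  have hxmem : ∀ (i : Fin n) (j : Fin (n + 1)), x i ∈ (f (i.succ, j)).1 :=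
    fun i j => extends_mem (hHc i j)
  have hxnot : ∀ (i : Fin n) (j : Fin (n + 1)), x i ∉ (f (i.castSucc, j)).1 :=
    fun i j => (hHc i j).1
  have hymem : ∀ (i : Fin (n + 1)) (j : Fin n), y j ∈ (f (i, j.succ)).1 :=
    fun i j => extends_mem (hVc i j)
  have hynot : ∀ (i : Fin (n + 1)) (j : Fin n), y j ∉ (f (i, j.castSucc)).1 :=
    fun i j => (hVc i j).1
  -- distinctness of x's and y's
  have hxy : ∀ (i j : Fin n), x i ≠ y j := by
    intro i j hEq
    have h1 : x i ∈ (f (i.succ, j.castSucc)).1 := hxmem i j.castSucc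
    have h2 : y j ∉ (f (i.succ, j.castSucc)).1 := hynot i.succ j
    rw [hEq] at h1
    exact h2 h1
  have hxlt : ∀ (i i' : Fin n), i < i' → x i ≠ x i' := by
    intro i i' hlt hEq
    have h1 : x i ∈ (f (i.succ, 0)).1 := hxmem i 0
    have hle : i.succ ≤ i'.castSucc := by
      simp only [Fin.le_def, Fin.val_succ, Fin.coe_castSucc]
      exact hlt
    have h2 : x i ∈ (f (i'.castSucc, 0)).1 := hmrow 0 i.succ i'.castSucc hle h1
    rw [hEq] at h2
    exact hxnot i' 0 h2
  have hylt : ∀ (j j' : Fin n), j < j' → y j ≠ y j' := by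
    intro j j' hlt hEq
    have h1 : y j ∈ (f (0, j.succ)).1 := hymem 0 j
    have hle : j.succ ≤ j'.castSucc := by
      simp only [Fin.le_def, Fin.val_succ, Fin.coe_castSucc]
      exact hlt
    have h2 : y j ∈ (f (0, j'.castSucc)).1 := hmcol 0 j.succ j'.castSucc hle h1
    rw [hEq] at h2
    exact hynot 0 j' h2
  refine ⟨x, y, ?_, ?_, hxy, ?_, ?_, ?_⟩
  · -- injectivity of x
    intro i i' hEq
    rcases lt_trichotomy i i' with h | h | h
    · exact absurd hEq (hxlt i i' h)
    · exact h
    · exact absurd hEq.symm (hxlt i' i h)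
  · -- injectivity of y
    intro j j' hEq
    rcases lt_trichotomy j j' with h | h | h
    · exact absurd hEq (hylt j j' h)
    · exact h
    · exact absurd hEq.symm (hylt j' j h)
  · -- conflict-freeness of x's
    intro i j
    have h1 : x i ∈ (f (Fin.last n, 0)).1 := by
      apply hmrow 0 i.succ (Fin.last n) _ (hxmem i 0)
      simp only [Fin.le_def, Fin.val_succ, Fin.val_last]
      omega
    have h2 : x j ∈ (f (Fin.last n, 0)).1 := by
      apply hmrow 0 j.succ (Fin.last n) _ (hxmem j 0)
      simp only [Fin.le_def, Fin.val_succ, Fin.val_last]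
      omega
    exact (f (Fin.last n, 0)).2.2 _ h1 _ h2
  · -- conflict-freeness of y's
    intro i j
    have h1 : y i ∈ (f (0, Fin.last n)).1 := by
      apply hmcol 0 i.succ (Fin.last n) _ (hymem 0 i)
      simp only [Fin.le_def, Fin.val_succ, Fin.val_last]
      omega
    have h2 : y j ∈ (f (0, Fin.last n)).1 := by
      apply hmcol 0 j.succ (Fin.last n) _ (hymem 0 j)
      simp only [Fin.le_def, Fin.val_succ, Fin.val_last]
      omega
    exact (f (0, Fin.last n)).2.2 _ h1 _ h2
  · -- concurrency
    intro i j
    refine ⟨?_, ?_, ?_⟩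
    · -- ¬ x i ≤ y j
      intro hle
      have h1 : y j ∈ (f (i.castSucc, j.succ)).1 := hymem i.castSucc j
      have h2 : x i ∈ (f (i.castSucc, j.succ)).1 :=
        (f (i.castSucc, j.succ)).2.1 (y j) h1 (x i) hle
      rcases ((hVc i.castSucc j).2 (x i)).mp h2 with h3 | h3
      · exact hxy i j h3
      · exact hxnot i j.castSucc h3
    · -- ¬ y j ≤ x i
      intro hle
      have h1 : x i ∈ (f (i.succ, j.castSucc)).1 := hxmem i j.castSucc
      have h2 : y j ∈ (f (i.succ, j.castSucc)).1 :=
        (f (i.succ, j.castSucc)).2.1 (x i) h1 (y j) hle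
      exact hynot i.succ j h2
    · -- ¬ conflict
      have h1 : x i ∈ (f (i.succ, j.succ)).1 :=
        extends_subset (hVc i.succ j) (hxmem i j.castSucc)
      have h2 : y j ∈ (f (i.succ, j.succ)).1 := hymem i.succ j
      exact (f (i.succ, j.succ)).2.2 _ h1 _ h2

end StmtAux
/-- (i) If the `n × n` square grid embeds isometrically and
direction-preservingly into `G(E)`, then `E` contains two disjoint
conflict-free `n`-element sets of pairwise concurrent events.
(ii) Conversely, if such pairs of sets exist for every `n`, then `G(E)` is not
hyperbolic. -/
theorem stmt18 {E : Type*} (ES : EventStructure E) (d : ℕ)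
    (hdeg : ∀ (c : ES.Config) (s : Finset E),
      (∀ e ∈ s, ES.Enabled c e) → s.card ≤ d) :
    (∀ (n : ℕ) (f : Fin (n + 1) × Fin (n + 1) → ES.Config),
      (∀ p q : Fin (n + 1) × Fin (n + 1),
        ES.configGraph.dist (f p) (f q) =
          (max (p.1 : ℕ) (q.1 : ℕ) - min (p.1 : ℕ) (q.1 : ℕ)) +
          (max (p.2 : ℕ) (q.2 : ℕ) - min (p.2 : ℕ) (q.2 : ℕ))) →
      (∀ (i : Fin n) (j : Fin (n + 1)), ∃ e,
        ES.Extends (f (i.castSucc, j)) (f (i.succ, j)) e) →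
      (∀ (i : Fin (n + 1)) (j : Fin n), ∃ e,
        ES.Extends (f (i, j.castSucc)) (f (i, j.succ)) e) →
      ∃ x y : Fin n → E, Function.Injective x ∧ Function.Injective y ∧
        (∀ i j, x i ≠ y j) ∧
        (∀ i j, ¬ ES.conflict (x i) (x j)) ∧
        (∀ i j, ¬ ES.conflict (y i) (y j)) ∧
        ∀ i j, ES.Concurrent (x i) (y j)) ∧
    ((∀ n : ℕ, ∃ x y : Fin n → E, Function.Injective x ∧ Function.Injective y ∧
        (∀ i j, x i ≠ y j) ∧ ∀ i j, ES.Concurrent (x i) (y j)) →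
      ¬ GraphHyperbolic ES.configGraph) := by
  constructor
  · intro n f hdist hH hV
    exact StmtAux.part1 f hdist hH hV
  · intro hyp
    exact StmtAux.part2 hdeg hyp
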